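/- Let the general degradation process map an initial set D_0 ⊆ {0,...,2^n-1} to D_n by successively applying the basic degradation mapping at levels 1 through n (each level's mapping applied to the image of the previous level). Then for every j ∈ D_n there exists i ∈ D_0 with j ⪯_c i, the induced mapping from D_0 onto D_n is a bijection, and |D_n| = |D_0|. -/
import Mathlib

/-- The covering relation on n-bit integers. -/
def cov (n j i : ℕ) : Prop := ∀ t < n, j.testBit t = true → i.testBit t = true

/-- `i` with bit `k` cleared (set to 0). -/
def clearBit (i k : ℕ) : ℕ := if i.testBit k then i - 2 ^ k else i

/-- The basic degradation mapping at level `k` on a set `D`: if the bit-`k` flip of `i`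
lies in `D` then `i` maps to itself, otherwise `i` maps to `i` with bit `k` cleared. -/
def bdm (D : Finset ℕ) (k i : ℕ) : ℕ := if (i ^^^ 2 ^ k) ∈ D then i else clearBit i k


/-- The general degradation process: `trace D₀ k i` is the node reached by `i ∈ D₀`
after successively applying the basic degradation mappings at levels `1,...,k`
(each level acting on the image of the previous one). -/
def trace (D0 : Finset ℕ) : ℕ → ℕ → ℕ
  | 0, i => i
  | k + 1, i => bdm (D0.image (trace D0 k)) k (trace D0 k i)

lemma xor_eq_add_of_and_eq_zero : ∀ a b : ℕ, a &&& b = 0 → a ^^^ b = a + b := by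
  intro a
  induction a using Nat.strong_induction_on with
  | _ a ih =>
    intro b h
    rcases Nat.eq_zero_or_pos a with rfl | ha
    · simp
    · have hd : a / 2 &&& b / 2 = 0 := by rw [← Nat.and_div_two, h]
      have hx := ih (a / 2) (Nat.div_lt_self ha (by norm_num)) (b / 2) hd
      have hm : ¬ (a % 2 = 1 ∧ b % 2 = 1) := by
        intro hc
        have := Nat.and_mod_two_eq_one.mpr hc
        rw [h] at this; simp at this
      have h1 : (a ^^^ b) / 2 = a / 2 ^^^ b / 2 := Nat.xor_div_two
      have h2 : (a ^^^ b) % 2 = (a + b) % 2 := Nat.xor_mod_two_eq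
      omega

lemma sub_eq_xor {i k : ℕ} (h : i.testBit k = true) : i - 2 ^ k = i ^^^ 2 ^ k := by
  have hd : (i ^^^ 2 ^ k) &&& 2 ^ k = 0 := by
    simp [Nat.and_two_pow, Nat.testBit_xor, h]
  have := xor_eq_add_of_and_eq_zero (i ^^^ 2 ^ k) (2 ^ k) hd
  rw [Nat.xor_assoc, Nat.xor_self, Nat.xor_zero] at this
  omega

lemma clearBit_testBit {i k t : ℕ} (h : (clearBit i k).testBit t = true) :
    i.testBit t = true := by
  unfold clearBit at h
  split_ifs at h with hk
  · rw [sub_eq_xor hk] at h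
    by_cases ht : t = k
    · subst ht
      simp [Nat.testBit_xor, hk] at h
    · simpa [Nat.testBit_xor, Nat.testBit_two_pow_of_ne (Ne.symm ht)] using h
  · exact h

lemma bdm_testBit {D : Finset ℕ} {k i t : ℕ} (h : (bdm D k i).testBit t = true) :
    i.testBit t = true := by
  unfold bdm at h
  split_ifs at h
  · exact h
  · exact clearBit_testBit h

lemma trace_testBit (D0 : Finset ℕ) (k i t : ℕ)
    (h : (trace D0 k i).testBit t = true) : i.testBit t = true := by
  induction k with
  | zero => simpa [trace] using h
  | succ k ih =>
    apply ih
    simp only [trace] at h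
    exact bdm_testBit h

lemma bdm_injOn (D : Finset ℕ) (k : ℕ) : Set.InjOn (bdm D k) D := by
  intro a ha b hb h
  simp only [Finset.mem_coe] at ha hb
  unfold bdm at h
  split_ifs at h with h1 h2 h2
  · exact h
  · unfold clearBit at h
    split_ifs at h with hb'
    · rw [sub_eq_xor hb'] at h
      exact absurd (h ▸ ha) h2
    · exact h
  · unfold clearBit at h
    split_ifs at h with ha'
    · rw [sub_eq_xor ha'] at h
      exact absurd (h ▸ hb) h1
    · exact h
  · unfold clearBit at h
    split_ifs at h with ha' hb' hb'
    · rw [sub_eq_xor ha', sub_eq_xor hb'] at h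
      exact Nat.xor_left_inj.mp h
    · rw [sub_eq_xor ha'] at h
      exact absurd (h ▸ hb) h1
    · rw [sub_eq_xor hb'] at h
      exact absurd (h ▸ ha) h2
    · exact h

lemma trace_injOn (D0 : Finset ℕ) (k : ℕ) : Set.InjOn (trace D0 k) D0 := by
  induction k with
  | zero => intro a _ b _ h; simpa [trace] using h
  | succ k ih =>
    intro a ha b hb h
    simp only [trace] at h
    refine ih ha hb (bdm_injOn (D0.image (trace D0 k)) k ?_ ?_ h)
    · exact Finset.mem_coe.mpr (Finset.mem_image_of_mem _ ha)
    · exact Finset.mem_coe.mpr (Finset.mem_image_of_mem _ hb)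

/-- Lemma 1: every element of the destination set `D_n` is covered by some element of the
initial set `D_0`, the induced mapping from `D_0` onto `D_n` is a bijection, and
`|D_n| = |D_0|`. -/
theorem degradation_process (n : ℕ) (D0 : Finset ℕ) (hD0 : ∀ i ∈ D0, i < 2 ^ n) :
    (∀ j ∈ D0.image (trace D0 n), ∃ i ∈ D0, cov n j i) ∧
    Set.InjOn (trace D0 n) D0 ∧
    (D0.image (trace D0 n)).card = D0.card := by
  refine ⟨?_, trace_injOn D0 n, Finset.card_image_of_injOn (trace_injOn D0 n)⟩
  intro j hj
  obtain ⟨i, hi, rfl⟩ := Finset.mem_image.mp hj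
  exact ⟨i, hi, fun t _ h => trace_testBit D0 n i t h⟩
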